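/- arXiv:1705.09677 — 4 statements merged into one kernel-verified Lean document; each statement's English description precedes it below -/
import Mathlib

section
/- For positive definite m×m matrices P and Q, the elementary symmetric polynomial E_ℓ is geodesically log-convex at the geodesic midpoint: E_ℓ(P # Q) ≤ √(E_ℓ(P) · E_ℓ(Q)), where P # Q = P^{1/2}(P^{-1/2} Q P^{-1/2})^{1/2} P^{1/2} is the matrix geometric mean. -/
open Matrix Finset

open scoped ComplexOrder in
/-- The positive semidefinite square root of a positive semidefinite matrix
(as `Matrix.PosSemidef.sqrt` was defined in Mathlib before its removal). -/
noncomputable def Matrix.PosSemidef.sqrt {n 𝕜 : Type*} [Fintype n] [RCLike 𝕜] [DecidableEq n]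
    {A : Matrix n n 𝕜} (hA : A.PosSemidef) : Matrix n n 𝕜 :=
  (hA.1.eigenvectorUnitary : Matrix n n 𝕜) * diagonal (fun i => ((√(hA.1.eigenvalues i) : ℝ) : 𝕜)) *
    (star hA.1.eigenvectorUnitary : Matrix n n 𝕜)

open scoped ComplexOrder in
lemma Matrix.PosSemidef.posSemidef_sqrt {n 𝕜 : Type*} [Fintype n] [RCLike 𝕜] [DecidableEq n]
    {A : Matrix n n 𝕜} (hA : A.PosSemidef) : hA.sqrt.PosSemidef := by
  unfold Matrix.PosSemidef.sqrt
  have := (Matrix.posSemidef_diagonal_iff (R := 𝕜) (d := fun i => ((√(hA.1.eigenvalues i) : ℝ) : 𝕜))).2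
    (fun i => by simp [Real.sqrt_nonneg])
  simpa [Matrix.star_eq_conjTranspose] using
    this.mul_mul_conjTranspose_same (hA.1.eigenvectorUnitary : Matrix n n 𝕜)

open Classical in
/-- `Esymm ℓ M` : the ℓ-th elementary symmetric polynomial of the eigenvalues of the
(symmetric) matrix `M`. -/
noncomputable def Esymm {m : ℕ} (ℓ : ℕ) (M : Matrix (Fin m) (Fin m) ℝ) : ℝ :=
  if h : M.IsHermitian then
    ∑ S ∈ Finset.powersetCard ℓ (Finset.univ : Finset (Fin m)), ∏ i ∈ S, h.eigenvalues i
  else 0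

/-- The matrix geometric mean `P # Q = P^{1/2} (P^{-1/2} Q P^{-1/2})^{1/2} P^{1/2}`. -/
noncomputable def geomMean {m : ℕ} (P Q : Matrix (Fin m) (Fin m) ℝ)
    (hP : P.PosDef) (hQ : Q.PosDef) : Matrix (Fin m) (Fin m) ℝ :=
  let S := hP.posSemidef.sqrt
  have hmid : (S⁻¹ * Q * S⁻¹).PosSemidef := by
    have h1 : (S⁻¹).IsHermitian := hP.posSemidef.posSemidef_sqrt.1.inv
    have h2 := hQ.posSemidef.conjTranspose_mul_mul_same (S⁻¹)
    rwa [h1.eq] at h2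
  S * hmid.sqrt * S

/-!
With `A = P^{1/2}` and `B = (A⁻¹ Q A⁻¹)^{1/2}` (both symmetric) we have `P = A Aᵀ`,
`Q = (AB)(AB)ᵀ` and `P # Q = (AB) Aᵀ`. The sum `E_ℓ(M)` is the trace of the `ℓ`-th compound
matrix `C_ℓ(M)` (the matrix of `ℓ × ℓ` minors), because `C_ℓ` is multiplicative by the
Cauchy–Binet formula and is diagonal on diagonal matrices. As `C_ℓ` also commutes with
transposition, `E_ℓ(X Yᵀ) = tr (C_ℓ(X) C_ℓ(Y)ᵀ)`, and the Cauchy–Schwarz inequality for the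
Frobenius inner product gives `E_ℓ(X Yᵀ)² ≤ E_ℓ(X Xᵀ) E_ℓ(Y Yᵀ)`.
-/

open Set.powersetCard
open Equiv (Perm)

namespace Set.powersetCard

variable {n : Type*} [LinearOrder n] {ℓ : ℕ}

lemma range_ofFinEmbEquiv_symm (S : powersetCard n ℓ) :
    Set.range (ofFinEmbEquiv.symm S) = S := by
  ext i; exact mem_range_ofFinEmbEquiv_symm_iff_mem S i

lemma ofFinEmbEquiv_symm_comp_perm_injective :
    Function.Injective fun x : powersetCard n ℓ × Perm (Fin ℓ) => ofFinEmbEquiv.symm x.1 ∘ x.2 := by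
  rintro ⟨S, σ⟩ ⟨T, τ⟩ h
  simp only at h
  have hrange (U : powersetCard n ℓ) (π : Perm (Fin ℓ)) :
      Set.range (ofFinEmbEquiv.symm U ∘ π) = U := by
    rw [π.surjective.range_comp, range_ofFinEmbEquiv_symm]
  have hST : S = T := SetLike.coe_injective (by rw [← hrange S σ, h, hrange])
  subst hST
  exact Prod.ext rfl (Equiv.ext fun i => (ofFinEmbEquiv.symm S).injective (congrFun h i))

lemma exists_ofFinEmbEquiv_symm_comp_perm_eq {p : Fin ℓ → n} (hp : Function.Injective p) :
    ∃ x : powersetCard n ℓ × Perm (Fin ℓ), ofFinEmbEquiv.symm x.1 ∘ x.2 = p := by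
  set S := ofFinEmb ℓ n ⟨p, hp⟩
  have hmem (i : Fin ℓ) : p i ∈ Set.range (ofFinEmbEquiv.symm S) := by
    rw [range_ofFinEmbEquiv_symm, SetLike.mem_coe, mem_ofFinEmb_iff_mem_range]
    exact ⟨i, rfl⟩
  choose σ hσ using hmem
  have hσinj : Function.Injective σ := fun i j hij => hp (by rw [← hσ i, ← hσ j, hij])
  exact ⟨(S, Equiv.ofBijective σ hσinj.bijective_of_finite), funext hσ⟩

end Set.powersetCard

namespace Matrix

variable {R : Type*} [CommRing R]

section CauchyBinet

variable {n : Type*} [Fintype n] {ℓ : ℕ}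

theorem det_mul_eq_sum_prod_mul_det_submatrix [DecidableEq n] (A : Matrix (Fin ℓ) n R)
    (B : Matrix n (Fin ℓ) R) :
    (A * B).det = ∑ p : Fin ℓ → n, (∏ i, A i (p i)) * (B.submatrix p id).det := by
  let g : Fin ℓ → n → Fin ℓ → R := fun i k => A i k • B k
  have hrows : A * B = fun i => ∑ k, g i k := by
    ext i j; simp [g, mul_apply, Finset.sum_apply]
  rw [det, hrows]
  refine ((detRowAlternating (R := R)).toMultilinearMap.map_sum g).trans
    (Finset.sum_congr rfl fun p _ => ?_)
  simp only [g, AlternatingMap.coe_multilinearMap, AlternatingMap.map_smul_univ, smul_eq_mul]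
  rfl

/-- The Cauchy–Binet formula. -/
theorem det_mul_eq_sum_det_submatrix_mul_det_submatrix [LinearOrder n] (A : Matrix (Fin ℓ) n R)
    (B : Matrix n (Fin ℓ) R) :
    (A * B).det = ∑ S : Set.powersetCard n ℓ,
      (A.submatrix id (ofFinEmbEquiv.symm S)).det * (B.submatrix (ofFinEmbEquiv.symm S) id).det := by
  set φ := fun x : Set.powersetCard n ℓ × Perm (Fin ℓ) => ⇑(ofFinEmbEquiv.symm x.1) ∘ ⇑x.2
  set F := fun p : Fin ℓ → n => (∏ i, A i (p i)) * (B.submatrix p id).det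
  -- A term with `p` not injective has two equal rows; an injective `p` is uniquely the
  -- increasing enumeration of its image composed with a permutation.
  have hF : ∀ p ∉ Finset.univ.image φ, F p = 0 := by
    intro p hp
    have hpinj : ¬ Function.Injective p := fun hinj => hp <| by
      obtain ⟨x, hx⟩ := exists_ofFinEmbEquiv_symm_comp_perm_eq hinj
      exact Finset.mem_image.mpr ⟨x, Finset.mem_univ _, hx⟩
    obtain ⟨i, j, hij, hne⟩ : ∃ i j, p i = p j ∧ i ≠ j := by
      simpa [Function.Injective] using hpinj
    have hrow : B.submatrix p id i = B.submatrix p id j := funext fun k => by simp [hij]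
    simp only [F, det_zero_of_row_eq hne hrow, mul_zero]
  rw [det_mul_eq_sum_prod_mul_det_submatrix,
    ← Finset.sum_subset (Finset.subset_univ _) fun p _ hp => hF p hp,
    Finset.sum_image fun x _ y _ h => ofFinEmbEquiv_symm_comp_perm_injective h,
    Fintype.sum_prod_type]
  refine Finset.sum_congr rfl fun S _ => ?_
  rw [← det_transpose (A.submatrix _ _), det_apply', Finset.sum_mul]
  refine Finset.sum_congr rfl fun σ _ => ?_
  have hperm : B.submatrix (ofFinEmbEquiv.symm S ∘ σ) id =
      (B.submatrix (ofFinEmbEquiv.symm S) id).submatrix σ id := rfl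
  simp only [F, hperm, det_permute, transpose_apply, submatrix_apply, Function.comp_apply, id]
  ring

end CauchyBinet

section Compound

variable {l m n : Type*} [LinearOrder l] [LinearOrder m] [LinearOrder n] (ℓ : ℕ)

def compound (M : Matrix m n R) : Matrix (Set.powersetCard m ℓ) (Set.powersetCard n ℓ) R :=
  of fun S T => (M.submatrix (ofFinEmbEquiv.symm S) (ofFinEmbEquiv.symm T)).det

theorem compound_mul [Fintype m] (M : Matrix l m R) (N : Matrix m n R) :
    compound ℓ (M * N) = compound ℓ M * compound ℓ N := by
  ext S T
  rw [compound, of_apply, submatrix_mul M N _ id _ Function.bijective_id,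
    det_mul_eq_sum_det_submatrix_mul_det_submatrix, mul_apply]
  rfl

theorem compound_transpose (M : Matrix m n R) : compound ℓ Mᵀ = (compound ℓ M)ᵀ := by
  ext S T
  rw [compound, of_apply, ← transpose_submatrix, det_transpose]
  rfl

theorem compound_diagonal (d : n → R) :
    compound ℓ (diagonal d) = diagonal fun S : Set.powersetCard n ℓ => ∏ i ∈ S.val, d i := by
  ext S T
  by_cases hST : S = T
  · subst hST
    rw [compound, of_apply, submatrix_diagonal _ _ (ofFinEmbEquiv.symm S).injective, det_diagonal,
      diagonal_apply_eq]
    exact Fintype.prod_equiv (orderIsoOfFin S).toEquiv _ _ (fun i => rfl) |>.trans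
      (Finset.prod_coe_sort S.val d)
  · obtain ⟨a, haT, haS⟩ := (exists_mem_notMem_iff_ne T S).mp (Ne.symm hST)
    obtain ⟨j, rfl⟩ : a ∈ Set.range (ofFinEmbEquiv.symm T) := by
      rwa [range_ofFinEmbEquiv_symm]
    rw [diagonal_apply_ne _ hST, compound, of_apply]
    refine det_eq_zero_of_column_eq_zero j fun i => diagonal_apply_ne _ fun h => haS ?_
    rw [← h, ← SetLike.mem_coe, ← range_ofFinEmbEquiv_symm]
    exact ⟨i, rfl⟩

theorem compound_one : compound ℓ (1 : Matrix n n R) = 1 := by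
  simpa using compound_diagonal ℓ (fun _ : n => (1 : R))

theorem trace_compound_mul_mul_of_mul_eq_one [Fintype n] {U V : Matrix n n R} (hVU : V * U = 1)
    (M : Matrix n n R) : (compound ℓ (U * M * V)).trace = (compound ℓ M).trace := by
  rw [compound_mul, compound_mul, trace_mul_comm, ← mul_assoc, ← compound_mul, hVU,
    compound_one, one_mul]

end Compound

theorem trace_mul_transpose_sq_le [LinearOrder R] [IsStrictOrderedRing R] {ι κ : Type*}
    [Fintype ι] [Fintype κ] (X Y : Matrix ι κ R) :
    (X * Yᵀ).trace ^ 2 ≤ (X * Xᵀ).trace * (Y * Yᵀ).trace := by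
  have hsum (A B : Matrix ι κ R) : (A * Bᵀ).trace = ∑ p : ι × κ, A p.1 p.2 * B p.1 p.2 := by
    simp [trace, mul_apply, Fintype.sum_prod_type]
  simpa only [hsum, sq] using Finset.sum_mul_sq_le_sq_mul_sq Finset.univ
    (fun p : ι × κ => X p.1 p.2) (fun p => Y p.1 p.2)

open scoped ComplexOrder in
theorem PosSemidef.sqrt_mul_sqrt {n 𝕜 : Type*} [Fintype n] [RCLike 𝕜] [DecidableEq n]
    {A : Matrix n n 𝕜} (hA : A.PosSemidef) : hA.sqrt * hA.sqrt = A := by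
  have hUU : star (hA.1.eigenvectorUnitary : Matrix n n 𝕜) * hA.1.eigenvectorUnitary = 1 :=
    Unitary.star_mul_self_of_mem hA.1.eigenvectorUnitary.2
  conv_rhs => rw [hA.1.spectral_theorem, Unitary.conjStarAlgAut_apply]
  rw [PosSemidef.sqrt, mul_assoc, ← mul_assoc (star _), ← mul_assoc (star _), hUU, one_mul,
    mul_assoc, ← mul_assoc (diagonal _), diagonal_mul_diagonal, ← mul_assoc]
  congr 3
  ext i
  rw [← RCLike.ofReal_mul, Real.mul_self_sqrt (hA.eigenvalues_nonneg i), Function.comp_apply]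

end Matrix

theorem esymm_eq_trace_compound {m : ℕ} {M : Matrix (Fin m) (Fin m) ℝ} (hM : M.IsHermitian)
    (ℓ : ℕ) : Esymm ℓ M = (compound ℓ M).trace := by
  have hU : star (hM.eigenvectorUnitary : Matrix (Fin m) (Fin m) ℝ) * hM.eigenvectorUnitary = 1 :=
    Unitary.star_mul_self_of_mem hM.eigenvectorUnitary.2
  conv_rhs => rw [hM.spectral_theorem, Unitary.conjStarAlgAut_apply,
    trace_compound_mul_mul_of_mul_eq_one ℓ hU, RCLike.ofReal_real_eq_id, Function.id_comp,
    compound_diagonal, trace_diagonal]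
  rw [Esymm, dif_pos hM]
  exact Finset.sum_subtype _ (fun S => by simp) _

theorem esymm_mul_transpose_sq_le {m : ℕ} (ℓ : ℕ) {X Y : Matrix (Fin m) (Fin m) ℝ}
    (hXY : (X * Yᵀ).IsHermitian) :
    Esymm ℓ (X * Yᵀ) ^ 2 ≤ Esymm ℓ (X * Xᵀ) * Esymm ℓ (Y * Yᵀ) := by
  have hself (Z : Matrix (Fin m) (Fin m) ℝ) : (Z * Zᵀ).IsHermitian := by
    simpa [conjTranspose_eq_transpose_of_trivial] using isHermitian_mul_conjTranspose_self Z
  simp only [esymm_eq_trace_compound hXY, esymm_eq_trace_compound (hself _), compound_mul,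
    compound_transpose]
  exact trace_mul_transpose_sq_le _ _

section GeomMean

variable {m : ℕ} {P Q : Matrix (Fin m) (Fin m) ℝ} (hP : P.PosDef) (hQ : Q.PosDef)

theorem isHermitian_geomMean : (geomMean P Q hP hQ).IsHermitian := by
  set S := hP.posSemidef.sqrt
  have hS : Sᴴ = S := hP.posSemidef.posSemidef_sqrt.1.eq
  have hconj (B : Matrix (Fin m) (Fin m) ℝ) (hB : B.IsHermitian) : (S * B * S).IsHermitian := by
    simpa only [hS] using isHermitian_conjTranspose_mul_mul S hB
  exact hconj _ (PosSemidef.posSemidef_sqrt _).1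

theorem exists_geomMean_eq_mul_transpose :
    ∃ X Y : Matrix (Fin m) (Fin m) ℝ,
      P = Y * Yᵀ ∧ Q = X * Xᵀ ∧ geomMean P Q hP hQ = X * Yᵀ := by
  set S := hP.posSemidef.sqrt
  have hSt : Sᵀ = S := (isHermitian_iff_isSymm.mp hP.posSemidef.posSemidef_sqrt.1).eq
  have hSS : S * S = P := hP.posSemidef.sqrt_mul_sqrt
  have hSunit : IsUnit S.det := by
    rw [isUnit_iff_ne_zero]
    intro h
    simpa [← hSS, h] using hP.det_pos
  have hmid : (S⁻¹ * Q * S⁻¹).PosSemidef := by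
    have h := hQ.posSemidef.conjTranspose_mul_mul_same S⁻¹
    rwa [hP.posSemidef.posSemidef_sqrt.1.inv.eq] at h
  set B := hmid.sqrt
  have hBt : Bᵀ = B := (isHermitian_iff_isSymm.mp hmid.posSemidef_sqrt.1).eq
  refine ⟨S * B, S, by rw [hSt, hSS], ?_, by rw [hSt]; rfl⟩
  calc Q = S * S⁻¹ * Q * (S⁻¹ * S) := by
        rw [mul_nonsing_inv _ hSunit, nonsing_inv_mul _ hSunit, one_mul, mul_one]
    _ = S * (B * B) * S := by rw [hmid.sqrt_mul_sqrt]; noncomm_ring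
    _ = S * B * (S * B)ᵀ := by rw [transpose_mul, hSt, hBt]; noncomm_ring

end GeomMean

theorem esymm_geomMean_le_general {m : ℕ} (P Q : Matrix (Fin m) (Fin m) ℝ)
    (hP : P.PosDef) (hQ : Q.PosDef) (ℓ : ℕ) :
    Esymm ℓ (geomMean P Q hP hQ) ≤ Real.sqrt (Esymm ℓ P * Esymm ℓ Q) := by
  obtain ⟨X, Y, hPY, hQX, hG⟩ := exists_geomMean_eq_mul_transpose hP hQ
  have hXY := isHermitian_geomMean hP hQ
  rw [hG] at hXY ⊢
  rw [hPY, hQX, mul_comm]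
  exact (le_abs_self _).trans (Real.abs_le_sqrt (esymm_mul_transpose_sq_le ℓ hXY))

theorem esymm_geomMean_le {m : ℕ} (P Q : Matrix (Fin m) (Fin m) ℝ)
    (hP : P.PosDef) (hQ : Q.PosDef) (ℓ : ℕ) (h1 : 1 ≤ ℓ) (h2 : ℓ ≤ m) :
    Esymm ℓ (geomMean P Q hP hQ) ≤ Real.sqrt (Esymm ℓ P * Esymm ℓ Q) :=
  esymm_geomMean_le_general P Q hP hQ ℓ
end

section
/- For positive definite matrices Z, Y and a full-column-rank matrix A, one has log E_ℓ((Aᵀ((Z+Y)/2)A)⁻¹) ≤ ½ log E_ℓ((AᵀZA)⁻¹) + ½ log E_ℓ((AᵀYA)⁻¹); that is, the map Z ↦ log E_ℓ((AᵀZA)⁻¹) is midpoint convex on positive definite matrices. -/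
open Matrix Finset

/-!
Write `E_ℓ(M⁻¹)` as the sum of the `ℓ × ℓ` principal minors `det (M⁻¹)_{SS}` of `M⁻¹`. By the
block inverse formula, `det (M⁻¹)_{SS} = (det S_M)⁻¹`, where `S_M` is the Schur complement in `M`
of its block on the complement of `S`. The Schur complement is superadditive and homogeneous in
`M`, the determinant is monotone, and `det P * det Q ≤ det ((P + Q) / 2) ^ 2` (diagonalize `P` and
`Q` simultaneously and use AM-GM on the eigenvalues); hence every principal minor of the inverse
is log-midpoint-convex in `M`, and by Cauchy–Schwarz so is their sum. Finally `Z ↦ AᵀZA` is linear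
and preserves positive definiteness when `A` has full column rank.
-/

namespace Matrix

open Polynomial in
theorem IsHermitian.esymm_eq_sum_det_submatrix {m : ℕ} {M : Matrix (Fin m) (Fin m) ℝ}
    (hM : M.IsHermitian) {k : ℕ} (hk : k ≤ m) :
    Esymm k M =
      ∑ s ∈ univ.powersetCard k, (M.submatrix (Subtype.val : s → Fin m) Subtype.val).det := by
  have hcoeff := M.charpoly_coeff_eq_sum_minors k (by simpa using hk)
  have hvieta := (univ.val.map hM.eigenvalues).prod_X_sub_C_coeff (k := m - k) (by simp)
  simp only [Multiset.map_map, Function.comp_def, Multiset.card_map, card_val, card_univ,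
    Fintype.card_fin, Nat.sub_sub_self hk, esymm_map_val] at hvieta
  rw [hM.charpoly_eq, Fintype.card_fin, prod_eq_multiset_prod] at hcoeff
  simp only [RCLike.ofReal_real_eq_id, id] at hcoeff
  rw [hvieta] at hcoeff
  rw [Esymm, dif_pos hM]
  exact mul_left_cancel₀ (pow_ne_zero _ (by norm_num)) hcoeff

theorem PosDef.esymm_pos {m : ℕ} {M : Matrix (Fin m) (Fin m) ℝ} (hM : M.PosDef) {k : ℕ}
    (hk : k ≤ m) : 0 < Esymm k M := by
  rw [hM.isHermitian.esymm_eq_sum_det_submatrix hk]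
  exact sum_pos (fun s _ => (hM.submatrix Subtype.val_injective).det_pos)
    (powersetCard_nonempty.mpr (by simpa using hk))

theorem mulVec_injective_of_rank_eq {K n m : Type*} [Field K] [Fintype m] {A : Matrix n m K}
    (hA : A.rank = Fintype.card m) : Function.Injective A.mulVec := by
  rw [mulVec_injective_iff, linearIndependent_iff_card_eq_finrank_span, Set.finrank,
    ← rank_eq_finrank_span_cols, hA]

section Determinant

open scoped MatrixOrder

variable {ι : Type*} [Fintype ι] [DecidableEq ι]

theorem PosSemidef.exists_unitary_diagonal {C : Matrix ι ι ℝ} (hC : C.PosSemidef) :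
    ∃ (U : Matrix ι ι ℝ) (c : ι → ℝ), U * Uᴴ = 1 ∧ (∀ i, 0 ≤ c i) ∧ C = U * diagonal c * Uᴴ := by
  have hdiag := hC.isHermitian.spectral_theorem
  rw [Unitary.conjStarAlgAut_apply, RCLike.ofReal_real_eq_id, Function.id_comp,
    star_eq_conjTranspose] at hdiag
  exact ⟨_, _, Unitary.mul_star_self_of_mem hC.isHermitian.eigenvectorUnitary.2,
    hC.eigenvalues_nonneg, hdiag⟩

theorem PosDef.exists_eq_mul_conjTranspose_and_eq_mul_diagonal_mul {P Q : Matrix ι ι ℝ}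
    (hP : P.PosDef) (hQ : Q.PosSemidef) :
    ∃ (V : Matrix ι ι ℝ) (c : ι → ℝ), (∀ i, 0 ≤ c i) ∧ P = V * Vᴴ ∧ Q = V * diagonal c * Vᴴ := by
  set S := CFC.sqrt P
  have hS : S.IsHermitian := (CFC.sqrt_nonneg P).posSemidef.isHermitian
  have hSS : S * S = P := CFC.sqrt_mul_sqrt_self P hP.posSemidef.nonneg
  have hSunit : IsUnit S.det := by
    refine isUnit_iff_ne_zero.mpr fun h => hP.det_pos.ne' ?_
    rw [← hSS, det_mul, h, zero_mul]
  have hC : (S⁻¹ * Q * S⁻¹).PosSemidef := by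
    have := hQ.conjTranspose_mul_mul_same S⁻¹
    rwa [hS.inv.eq] at this
  obtain ⟨U, c, hU, hc, hCU⟩ := hC.exists_unitary_diagonal
  refine ⟨S * U, c, hc, ?_, ?_⟩
  · rw [conjTranspose_mul, hS.eq, Matrix.mul_assoc, ← Matrix.mul_assoc U, hU, Matrix.one_mul, hSS]
  · calc Q = S * (S⁻¹ * Q * S⁻¹) * S := by
          simp only [Matrix.mul_assoc, nonsing_inv_mul _ hSunit, Matrix.mul_one]
          rw [← Matrix.mul_assoc, mul_nonsing_inv _ hSunit, Matrix.one_mul]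
      _ = S * U * diagonal c * (S * U)ᴴ := by
          rw [hCU, conjTranspose_mul, hS.eq]
          simp only [Matrix.mul_assoc]

theorem PosDef.exists_det_smul_add_smul_eq_prod {P Q : Matrix ι ι ℝ} (hP : P.PosDef)
    (hQ : Q.PosSemidef) :
    ∃ c : ι → ℝ, (∀ i, 0 ≤ c i) ∧ ∀ a b : ℝ, (a • P + b • Q).det = P.det * ∏ i, (a + b * c i) := by
  obtain ⟨V, c, hc, rfl, rfl⟩ := hP.exists_eq_mul_conjTranspose_and_eq_mul_diagonal_mul hQ
  refine ⟨c, hc, fun a b => ?_⟩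
  have hdiag : diagonal (fun i => a + b * c i) = a • 1 + b • diagonal c := by
    ext i j
    by_cases h : i = j <;> simp [h]
  have hfactor : a • (V * Vᴴ) + b • (V * diagonal c * Vᴴ) =
      V * diagonal (fun i => a + b * c i) * Vᴴ := by
    rw [hdiag, Matrix.mul_add, Matrix.add_mul, Matrix.mul_smul, Matrix.smul_mul, Matrix.mul_one,
      Matrix.mul_smul, Matrix.smul_mul]
  rw [hfactor, det_mul, det_mul, det_mul, det_diagonal]
  ring

theorem PosDef.det_le_det_of_le {P R : Matrix ι ι ℝ} (hP : P.PosDef) (hPR : P ≤ R) :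
    P.det ≤ R.det := by
  obtain ⟨c, hc, hdet⟩ := hP.exists_det_smul_add_smul_eq_prod hPR
  have hR := hdet 1 1
  rw [one_smul, one_smul, add_sub_cancel] at hR
  rw [hR]
  exact le_mul_of_one_le_right hP.det_pos.le (Finset.one_le_prod fun i _ => by linarith [hc i])

theorem PosDef.det_mul_det_le_det_midpoint_sq {P Q : Matrix ι ι ℝ} (hP : P.PosDef)
    (hQ : Q.PosSemidef) : P.det * Q.det ≤ ((1 / 2 : ℝ) • (P + Q)).det ^ 2 := by
  obtain ⟨c, hc, hdet⟩ := hP.exists_det_smul_add_smul_eq_prod hQ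
  have hQdet := hdet 0 1
  rw [zero_smul, one_smul, zero_add] at hQdet
  calc P.det * Q.det = P.det ^ 2 * ∏ i, c i := by simp [hQdet, sq, mul_assoc]
    _ ≤ P.det ^ 2 * ∏ i, (1 / 2 + 1 / 2 * c i) ^ 2 := by
        gcongr with i
        · exact fun i _ => hc i
        · nlinarith [sq_nonneg (c i - 1)]
    _ = ((1 / 2 : ℝ) • (P + Q)).det ^ 2 := by rw [smul_add, hdet, mul_pow, prod_pow]

end Determinant

section SchurComplement

variable {k l α : Type*} [Fintype l] [DecidableEq l] [CommRing α]

noncomputable def schurComplement₂₂ (X : Matrix (k ⊕ l) (k ⊕ l) α) : Matrix k k α :=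
  X.toBlocks₁₁ - X.toBlocks₁₂ * X.toBlocks₂₂⁻¹ * X.toBlocks₂₁

theorem det_eq_det_toBlocks₂₂_mul_det_schurComplement₂₂ [Fintype k] [DecidableEq k]
    {X : Matrix (k ⊕ l) (k ⊕ l) α} (hD : IsUnit X.toBlocks₂₂.det) :
    X.det = X.toBlocks₂₂.det * X.schurComplement₂₂.det := by
  let _ := X.toBlocks₂₂.invertibleOfIsUnitDet hD
  conv_lhs => rw [← fromBlocks_toBlocks X]
  rw [det_fromBlocks₂₂, invOf_eq_nonsing_inv, schurComplement₂₂]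

theorem toBlocks₁₁_inv [Fintype k] [DecidableEq k] {X : Matrix (k ⊕ l) (k ⊕ l) α}
    (hD : IsUnit X.toBlocks₂₂.det) (hX : IsUnit X.det) :
    X⁻¹.toBlocks₁₁ = X.schurComplement₂₂⁻¹ := by
  set A := X.toBlocks₁₁
  set B := X.toBlocks₁₂
  set C := X.toBlocks₂₁
  set D := X.toBlocks₂₂
  let _ := D.invertibleOfIsUnitDet hD
  have hS : IsUnit (A - B * ⅟D * C).det := by
    rw [det_eq_det_toBlocks₂₂_mul_det_schurComplement₂₂ hD] at hX
    rw [invOf_eq_nonsing_inv]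
    exact isUnit_of_mul_isUnit_right hX
  let _ := (A - B * ⅟D * C).invertibleOfIsUnitDet hS
  have hX' : IsUnit (fromBlocks A B C D).det := by rwa [fromBlocks_toBlocks]
  let _ := (fromBlocks A B C D).invertibleOfIsUnitDet hX'
  conv_lhs => rw [← fromBlocks_toBlocks X]
  rw [← invOf_eq_nonsing_inv, invOf_fromBlocks₂₂_eq, toBlocks_fromBlocks₁₁,
    invOf_eq_nonsing_inv, schurComplement₂₂, invOf_eq_nonsing_inv]

theorem schurComplement₂₂_smul {X : Matrix (k ⊕ l) (k ⊕ l) α} {c : α} (hc : IsUnit c)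
    (hD : IsUnit X.toBlocks₂₂.det) : (c • X).schurComplement₂₂ = c • X.schurComplement₂₂ := by
  obtain ⟨u, rfl⟩ := hc
  have hinv : ((u : α) • X).toBlocks₂₂⁻¹ = u⁻¹ • X.toBlocks₂₂⁻¹ := inv_smul' _ u hD
  have hblocks : ((u : α) • X).toBlocks₁₁ = (u : α) • X.toBlocks₁₁ ∧
      ((u : α) • X).toBlocks₁₂ = (u : α) • X.toBlocks₁₂ ∧
      ((u : α) • X).toBlocks₂₁ = (u : α) • X.toBlocks₂₁ := ⟨rfl, rfl, rfl⟩
  simp only [schurComplement₂₂, hinv, hblocks.1, hblocks.2.1, hblocks.2.2, Units.smul_def,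
    Matrix.smul_mul, Matrix.mul_smul, smul_sub, smul_smul]
  simp

end SchurComplement

open scoped MatrixOrder in
theorem PosDef.mul_inv_mul_conjTranspose_add_le {k l : Type*} [Fintype k] [Fintype l]
    [DecidableEq l] {B₁ B₂ : Matrix k l ℝ} {D₁ D₂ : Matrix l l ℝ}
    (h₁ : D₁.PosDef) (h₂ : D₂.PosDef) :
    (B₁ + B₂) * (D₁ + D₂)⁻¹ * (B₁ + B₂)ᴴ ≤ B₁ * D₁⁻¹ * B₁ᴴ + B₂ * D₂⁻¹ * B₂ᴴ := by
  -- the Schur complement of `D` in each summand vanishes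
  have hblock : ∀ {B : Matrix k l ℝ} {D : Matrix l l ℝ}, D.PosDef →
      (fromBlocks (B * D⁻¹ * Bᴴ) B Bᴴ D).PosSemidef := fun {B D} hD => by
    let _ := D.invertibleOfIsUnitDet hD.det_pos.ne'.isUnit
    rw [PosDef.fromBlocks₂₂ _ _ hD, sub_self]
    exact .zero
  have hsum := (hblock (B := B₁) h₁).add (hblock (B := B₂) h₂)
  rw [fromBlocks_add, ← conjTranspose_add] at hsum
  let _ := (D₁ + D₂).invertibleOfIsUnitDet (h₁.add h₂).det_pos.ne'.isUnit
  exact (PosDef.fromBlocks₂₂ _ _ (h₁.add h₂)).mp hsum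

section PosDefSchurComplement

open scoped MatrixOrder

variable {k l : Type*} [Fintype k] [Fintype l] [DecidableEq l]

theorem PosDef.toBlocks₁₁_inv [DecidableEq k] {X : Matrix (k ⊕ l) (k ⊕ l) ℝ} (hX : X.PosDef) :
    X⁻¹.toBlocks₁₁ = X.schurComplement₂₂⁻¹ :=
  Matrix.toBlocks₁₁_inv (hX.submatrix Sum.inr_injective).det_pos.ne'.isUnit hX.det_pos.ne'.isUnit

theorem PosDef.schurComplement₂₂ [DecidableEq k] {X : Matrix (k ⊕ l) (k ⊕ l) ℝ}
    (hX : X.PosDef) : X.schurComplement₂₂.PosDef := by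
  have h : X⁻¹.toBlocks₁₁.PosDef := hX.inv.submatrix Sum.inl_injective
  rwa [hX.toBlocks₁₁_inv, posDef_inv_iff] at h

theorem PosDef.schurComplement₂₂_add_le {M N : Matrix (k ⊕ l) (k ⊕ l) ℝ} (hM : M.PosDef)
    (hN : N.PosDef) : M.schurComplement₂₂ + N.schurComplement₂₂ ≤ (M + N).schurComplement₂₂ := by
  have h : (M.toBlocks₁₂ + N.toBlocks₁₂) * (M.toBlocks₂₂ + N.toBlocks₂₂)⁻¹ *
        (M.toBlocks₁₂ + N.toBlocks₁₂)ᴴ ≤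
      M.toBlocks₁₂ * M.toBlocks₂₂⁻¹ * M.toBlocks₁₂ᴴ +
        N.toBlocks₁₂ * N.toBlocks₂₂⁻¹ * N.toBlocks₁₂ᴴ :=
    (hM.submatrix Sum.inr_injective).mul_inv_mul_conjTranspose_add_le
      (hN.submatrix Sum.inr_injective)
  have hC : ∀ {X : Matrix (k ⊕ l) (k ⊕ l) ℝ}, X.IsHermitian → X.toBlocks₂₁ = X.toBlocks₁₂ᴴ :=
    fun {X} hX => (isHermitian_fromBlocks_iff.mp ((fromBlocks_toBlocks X).symm ▸ hX)).2.1.symm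
  simp only [Matrix.schurComplement₂₂, hC hM.isHermitian, hC hN.isHermitian,
    hC (hM.add hN).isHermitian]
  calc _ = (M.toBlocks₁₁ + N.toBlocks₁₁) - (M.toBlocks₁₂ * M.toBlocks₂₂⁻¹ * M.toBlocks₁₂ᴴ +
        N.toBlocks₁₂ * N.toBlocks₂₂⁻¹ * N.toBlocks₁₂ᴴ) := by abel
    _ ≤ _ := sub_le_sub_left h _

theorem PosDef.det_toBlocks₁₁_inv_midpoint_sq_le [DecidableEq k]
    {M N : Matrix (k ⊕ l) (k ⊕ l) ℝ} (hM : M.PosDef) (hN : N.PosDef) :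
    ((1 / 2 : ℝ) • (M + N))⁻¹.toBlocks₁₁.det ^ 2 ≤ M⁻¹.toBlocks₁₁.det * N⁻¹.toBlocks₁₁.det := by
  have hMN := hM.add hN
  have hmid := hMN.smul (one_half_pos (α := ℝ))
  have hP := hM.schurComplement₂₂
  have hQ := hN.schurComplement₂₂
  have hPQ := (hP.add hQ).smul (one_half_pos (α := ℝ))
  have hle : (1 / 2 : ℝ) • (M.schurComplement₂₂ + N.schurComplement₂₂) ≤
      ((1 / 2 : ℝ) • (M + N)).schurComplement₂₂ := by
    rw [schurComplement₂₂_smul (by norm_num) (hMN.submatrix Sum.inr_injective).det_pos.ne'.isUnit]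
    exact smul_le_smul_of_nonneg_left (hM.schurComplement₂₂_add_le hN) (by norm_num)
  have key : M.schurComplement₂₂.det * N.schurComplement₂₂.det ≤
      ((1 / 2 : ℝ) • (M + N)).schurComplement₂₂.det ^ 2 :=
    (hP.det_mul_det_le_det_midpoint_sq hQ.posSemidef).trans <|
      pow_le_pow_left₀ hPQ.det_pos.le (hPQ.det_le_det_of_le hle) 2
  simp only [hM.toBlocks₁₁_inv, hN.toBlocks₁₁_inv, hmid.toBlocks₁₁_inv, det_nonsing_inv,
    Ring.inverse_eq_inv', inv_pow, ← mul_inv]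
  exact inv_anti₀ (mul_pos hP.det_pos hQ.det_pos) key

end PosDefSchurComplement

theorem PosDef.det_inv_submatrix_midpoint_sq_le {ι : Type*} [Fintype ι] [DecidableEq ι]
    {M N : Matrix ι ι ℝ} (hM : M.PosDef) (hN : N.PosDef) (s : Finset ι) :
    (((1 / 2 : ℝ) • (M + N))⁻¹.submatrix (Subtype.val : s → ι) Subtype.val).det ^ 2 ≤
      (M⁻¹.submatrix (Subtype.val : s → ι) Subtype.val).det *
        (N⁻¹.submatrix (Subtype.val : s → ι) Subtype.val).det := by
  set e := Equiv.sumCompl (· ∈ s)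
  have hinv : ∀ X : Matrix ι ι ℝ,
      X⁻¹.submatrix (Subtype.val : s → ι) Subtype.val = (X.submatrix e e)⁻¹.toBlocks₁₁ := by
    intro X
    rw [inv_submatrix_equiv]
    rfl
  have hmid : ((1 / 2 : ℝ) • (M + N)).submatrix e e =
      (1 / 2 : ℝ) • (M.submatrix e e + N.submatrix e e) := rfl
  simpa only [hinv, hmid] using
    (hM.submatrix e.injective).det_toBlocks₁₁_inv_midpoint_sq_le (hN.submatrix e.injective)

theorem PosDef.esymm_inv_midpoint_sq_le {m : ℕ} {M N : Matrix (Fin m) (Fin m) ℝ}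
    (hM : M.PosDef) (hN : N.PosDef) {ℓ : ℕ} (hℓ : ℓ ≤ m) :
    Esymm ℓ ((1 / 2 : ℝ) • (M + N))⁻¹ ^ 2 ≤ Esymm ℓ M⁻¹ * Esymm ℓ N⁻¹ := by
  have hdet_nonneg : ∀ {X : Matrix (Fin m) (Fin m) ℝ}, X.PosDef → ∀ s : Finset (Fin m),
      0 ≤ (X⁻¹.submatrix (Subtype.val : s → Fin m) Subtype.val).det :=
    fun hX _ => (hX.inv.submatrix Subtype.val_injective).det_pos.le
  rw [((hM.add hN).smul one_half_pos).inv.isHermitian.esymm_eq_sum_det_submatrix hℓ,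
    hM.inv.isHermitian.esymm_eq_sum_det_submatrix hℓ,
    hN.inv.isHermitian.esymm_eq_sum_det_submatrix hℓ]
  exact sum_sq_le_sum_mul_sum_of_sq_le_mul _ (fun s _ => hdet_nonneg hM s)
    (fun s _ => hdet_nonneg hN s) (fun s _ => hM.det_inv_submatrix_midpoint_sq_le hN s)

end Matrix

theorem log_esymm_inv_midpoint_convex_general {n m : ℕ} (A : Matrix (Fin n) (Fin m) ℝ)
    (hA : A.rank = m) (Z Y : Matrix (Fin n) (Fin n) ℝ)
    (hZ : Z.PosDef) (hY : Y.PosDef) (ℓ : ℕ) (h2 : ℓ ≤ m) :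
    Real.log (Esymm ℓ (Aᵀ * ((1 / 2 : ℝ) • (Z + Y)) * A)⁻¹) ≤
      (1 / 2) * Real.log (Esymm ℓ (Aᵀ * Z * A)⁻¹) +
        (1 / 2) * Real.log (Esymm ℓ (Aᵀ * Y * A)⁻¹) := by
  have hinj : Function.Injective A.mulVec := mulVec_injective_of_rank_eq (by simpa using hA)
  have hM : (Aᵀ * Z * A).PosDef := by simpa using hZ.conjTranspose_mul_mul_same hinj
  have hN : (Aᵀ * Y * A).PosDef := by simpa using hY.conjTranspose_mul_mul_same hinj
  have hmid : Aᵀ * ((1 / 2 : ℝ) • (Z + Y)) * A = (1 / 2 : ℝ) • (Aᵀ * Z * A + Aᵀ * Y * A) := by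
    rw [Matrix.mul_smul, Matrix.smul_mul, Matrix.mul_add, Matrix.add_mul]
  rw [hmid]
  have hpos := ((hM.add hN).smul (one_half_pos (α := ℝ))).inv.esymm_pos h2
  have hlog := Real.log_le_log (pow_pos hpos 2) (hM.esymm_inv_midpoint_sq_le hN h2)
  rw [Real.log_pow, Real.log_mul (hM.inv.esymm_pos h2).ne' (hN.inv.esymm_pos h2).ne'] at hlog
  push_cast at hlog
  linarith

theorem log_esymm_inv_midpoint_convex {n m : ℕ} (A : Matrix (Fin n) (Fin m) ℝ)
    (hA : A.rank = m) (Z Y : Matrix (Fin n) (Fin n) ℝ)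
    (hZ : Z.PosDef) (hY : Y.PosDef) (ℓ : ℕ) (h1 : 1 ≤ ℓ) (h2 : ℓ ≤ m) :
    Real.log (Esymm ℓ (Aᵀ * ((1 / 2 : ℝ) • (Z + Y)) * A)⁻¹) ≤
      (1 / 2) * Real.log (Esymm ℓ (Aᵀ * Z * A)⁻¹) +
        (1 / 2) * Real.log (Esymm ℓ (Aᵀ * Y * A)⁻¹) :=
  log_esymm_inv_midpoint_convex_general A hA Z Y hZ hY ℓ h2
end

section
/- Let X ∈ ℝ^{n×m} with n ≥ m have full column rank and let m ≤ k ≤ n. Then Σ_{S ⊆ [n], |S|=k} det(X_Sᵀ X_S) = C(n−m, k−m) · det(Xᵀ X), where X_S is the submatrix of X consisting of rows indexed by S. -/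
/-!
Expanding `det (Yᵀ * Y)` multilinearly in the columns of `Y` gives a sum over maps
`p : Fin m → rows` whose terms vanish unless `p` is injective (the first half of Cauchy–Binet);
for the row submatrix `X_S` these are exactly the terms of `det (Xᵀ * X)` with `p` landing in `S`.
Summing over the `k`-subsets `S` therefore counts each injective `p` once for every `k`-set
containing its `m`-element image, that is `(n - m).choose (k - m)` times.
-/

open Matrix Finset

/-- The submatrix of `X` keeping only the rows indexed by `S`. -/
def rowSub {n m : ℕ} (X : Matrix (Fin n) (Fin m) ℝ) (S : Finset (Fin n)) :
    Matrix {i // i ∈ S} (Fin m) ℝ :=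
  X.submatrix Subtype.val id

namespace Matrix

variable {R : Type*} [CommRing R] {n ι : Type*} [Fintype n] [DecidableEq n]

theorem det_submatrix_id_eq_zero_of_not_injective (M : Matrix n ι R) {p : n → ι}
    (hp : ¬p.Injective) : (M.submatrix id p).det = 0 := by
  obtain ⟨i, j, hpij, hij⟩ := Function.not_injective_iff.mp hp
  exact det_zero_of_column_eq hij fun r => by simp [hpij]

variable [Fintype ι]

theorem det_mul_eq_sum_det_submatrix_mul_prod (M : Matrix n ι R) (N : Matrix ι n R) :
    (M * N).det = ∑ p : n → ι, (M.submatrix id p).det * ∏ i, N (p i) i := by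
  simp only [det_apply', mul_apply, prod_univ_sum, mul_sum, sum_mul, Fintype.piFinset_univ,
    submatrix_apply, id, prod_mul_distrib, mul_assoc]
  exact sum_comm

variable [DecidableEq ι]

theorem det_transpose_mul_self_submatrix (X : Matrix ι n R) (S : Finset ι) :
    ((X.submatrix (fun i : S => (i : ι)) id)ᵀ * X.submatrix (fun i : S => (i : ι)) id).det =
      ∑ p : n → ι with ∀ i, p i ∈ S, (Xᵀ.submatrix id p).det * ∏ i, X (p i) i := by
  rw [det_mul_eq_sum_det_submatrix_mul_prod, ← sum_subtype_eq_sum_filter, subtype_univ]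
  exact Fintype.sum_equiv Equiv.subtypePiEquivPi.symm _ _ fun q => rfl

theorem sum_powersetCard_det_transpose_mul_self_submatrix (X : Matrix ι n R) {k : ℕ}
    (hk : Fintype.card n ≤ k) :
    ∑ S ∈ powersetCard k (univ : Finset ι),
        ((X.submatrix (fun i : S => (i : ι)) id)ᵀ * X.submatrix (fun i : S => (i : ι)) id).det =
      (Fintype.card ι - Fintype.card n).choose (k - Fintype.card n) • (Xᵀ * X).det := by
  simp_rw [det_transpose_mul_self_submatrix, det_mul_eq_sum_det_submatrix_mul_prod, smul_sum]
  rw [sum_comm' (t' := univ) (s' := fun p => {S ∈ powersetCard k univ | image p univ ⊆ S})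
    (by simp [image_subset_iff, and_comm])]
  refine sum_congr rfl fun p _ => ?_
  rw [sum_const]
  by_cases hp : p.Injective
  · have hcard : #(image p univ) = Fintype.card n := by
      rw [card_image_of_injective _ hp, card_univ]
    rw [card_filter_powersetCard_subset _ _ _ (subset_univ _) (hcard ▸ hk), hcard, card_univ]
  · simp [det_submatrix_id_eq_zero_of_not_injective _ hp]

end Matrix

theorem sum_det_gram_subsets_general {n m : ℕ} (X : Matrix (Fin n) (Fin m) ℝ)
    (k : ℕ) (hmk : m ≤ k) :
    ∑ S ∈ Finset.powersetCard k (Finset.univ : Finset (Fin n)),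
        ((rowSub X S)ᵀ * rowSub X S).det =
      ((n - m).choose (k - m) : ℝ) * (Xᵀ * X).det := by
  simpa [rowSub] using
    sum_powersetCard_det_transpose_mul_self_submatrix X (k := k) (by simpa using hmk)

theorem sum_det_gram_subsets {n m : ℕ} (X : Matrix (Fin n) (Fin m) ℝ)
    (hX : X.rank = m) (k : ℕ) (hmk : m ≤ k) (hkn : k ≤ n) :
    ∑ S ∈ Finset.powersetCard k (Finset.univ : Finset (Fin n)),
        ((rowSub X S)ᵀ * rowSub X S).det =
      ((n - m).choose (k - m) : ℝ) * (Xᵀ * X).det :=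
  sum_det_gram_subsets_general X k hmk
end

section
/- If z, z' ∈ ℝⁿ satisfy 0 ≤ z ≤ z' componentwise and Xᵀ Diag(z) X is positive definite, then E_ℓ((Xᵀ Diag(z') X)⁻¹) ≤ E_ℓ((Xᵀ Diag(z) X)⁻¹) for each 1 ≤ ℓ ≤ m. -/
/-!
Weighting the rows of `X` by `z ≤ z'` gives `A = Xᵀ Diag(z) X ≤ B = Xᵀ Diag(z') X` in the Loewner
order, hence `B⁻¹ ≤ A⁻¹`. The elementary symmetric polynomial `E_ℓ` of the eigenvalues of a
symmetric matrix is, up to the sign `(-1)^ℓ`, a coefficient of its characteristic polynomial, so it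
equals the sum of its principal `ℓ × ℓ` minors. Principal submatrices inherit the Loewner order,
and the determinant is monotone on positive definite matrices: conjugating by `A^{-1/2}` reduces
`det A ≤ det B` to `1 ≤ det Q` for `Q ≥ 1`, whose eigenvalues are all at least `1`.
-/

open Matrix Finset

open scoped MatrixOrder ComplexOrder

namespace Matrix

section RCLike

variable {n 𝕜 : Type*} [RCLike 𝕜] {A B : Matrix n n 𝕜}

lemma PosDef.of_le (hA : A.PosDef) (hAB : A ≤ B) : B.PosDef := by
  simpa using hA.add_posSemidef hAB

lemma submatrix_le_submatrix {m : Type*} (hAB : A ≤ B) (e : m → n) :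
    A.submatrix e e ≤ B.submatrix e e :=
  PosSemidef.submatrix hAB e

lemma PosDef.inv_le_inv [Fintype n] [DecidableEq n] (hA : A.PosDef) (hAB : A ≤ B) :
    B⁻¹ ≤ A⁻¹ := by
  have hB := hA.of_le hAB
  have hAdet : IsUnit A.det := hA.isUnit.map detMonoidHom
  have hBdet : IsUnit B.det := hB.isUnit.map detMonoidHom
  have key : A⁻¹ - B⁻¹ = B⁻¹ * (B - A) * B⁻¹ + (B⁻¹ * (B - A)) * A⁻¹ * ((B - A) * B⁻¹) := by
    simp only [Matrix.mul_sub, Matrix.sub_mul, Matrix.mul_assoc, nonsing_inv_mul _ hBdet,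
      mul_nonsing_inv _ hAdet, mul_nonsing_inv _ hBdet, nonsing_inv_mul_cancel_left _ _ hAdet,
      Matrix.mul_one, Matrix.one_mul]
    abel
  have hfirst := hAB.conjTranspose_mul_mul_same B⁻¹
  have hsecond := hA.inv.posSemidef.conjTranspose_mul_mul_same ((B - A) * B⁻¹)
  rw [hB.inv.isHermitian.eq] at hfirst
  rw [conjTranspose_mul, hB.inv.isHermitian.eq, hAB.isHermitian.eq] at hsecond
  rw [le_iff, key]
  exact hfirst.add hsecond

end RCLike

lemma transpose_mul_diagonal_mul_monotone {m n : Type*} [Fintype m] [DecidableEq m] [Finite n]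
    (X : Matrix m n ℝ) : Monotone fun z : m → ℝ => Xᵀ * diagonal z * X := by
  intro z z' h
  rw [le_iff, ← Matrix.sub_mul, ← Matrix.mul_sub, diagonal_sub,
    ← conjTranspose_eq_transpose_of_trivial]
  exact (PosSemidef.diagonal (sub_nonneg.2 h)).conjTranspose_mul_mul_same X

variable {n : Type*} [Fintype n] [DecidableEq n]

lemma one_le_det_of_one_le {Q : Matrix n n ℝ} (hQ : 1 ≤ Q) : 1 ≤ Q.det := by
  have hQh : Q.IsHermitian := by simpa using (PosDef.one.of_le hQ).isHermitian
  rw [hQh.det_eq_prod_eigenvalues]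
  exact one_le_prod fun i _ ↦
    (CFC.one_le_iff Q).1 hQ _ (hQh.eigenvalues_mem_spectrum_real i)

lemma PosDef.det_le_det {A B : Matrix n n ℝ} (hA : A.PosDef) (hAB : A ≤ B) :
    A.det ≤ B.det := by
  set S := CFC.sqrt A
  have hSS : S * S = A := CFC.sqrt_mul_sqrt_self A hA.posSemidef.nonneg
  have hS : IsUnit S := (CFC.isUnit_sqrt_iff A hA.posSemidef.nonneg).2 hA.isUnit
  have hSdet : IsUnit S.det := hS.map detMonoidHom
  have hSinv : star S⁻¹ = S⁻¹ := by
    rw [star_eq_conjTranspose, conjTranspose_nonsing_inv, ← star_eq_conjTranspose,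
      (CFC.sqrt_nonneg A).isSelfAdjoint.star_eq]
  have hone : 1 ≤ S⁻¹ * B * S⁻¹ := by
    simpa [hSinv, ← hSS, Matrix.mul_assoc, mul_nonsing_inv _ hSdet, nonsing_inv_mul _ hSdet]
      using star_left_conjugate_le_conjugate hAB S⁻¹
  have hdet : (S⁻¹ * B * S⁻¹).det * A.det = B.det := by
    rw [← hSS, ← det_mul, Matrix.mul_assoc, nonsing_inv_mul_cancel_left _ _ hSdet, det_conj' hS]
  calc A.det ≤ (S⁻¹ * B * S⁻¹).det * A.det :=
        le_mul_of_one_le_left hA.det_pos.le (one_le_det_of_one_le hone)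
    _ = B.det := hdet

lemma IsHermitian.sum_det_submatrix_eq_sum_prod_eigenvalues {A : Matrix n n ℝ}
    (hA : A.IsHermitian) (k : ℕ) :
    ∑ s ∈ powersetCard k univ, (A.submatrix (Subtype.val : s → n) Subtype.val).det =
      ∑ s ∈ powersetCard k univ, ∏ i ∈ s, hA.eigenvalues i := by
  by_cases hk : k ≤ Fintype.card n
  · have hcoeff := A.charpoly_coeff_eq_sum_minors k hk
    have hprod : ∏ i, (Polynomial.X - Polynomial.C (hA.eigenvalues i)) =
        ((univ.val.map hA.eigenvalues).map fun t ↦ Polynomial.X - Polynomial.C t).prod := by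
      rw [Multiset.map_map]; rfl
    rw [hA.charpoly_eq] at hcoeff
    simp only [RCLike.ofReal_real_eq_id, id_eq] at hcoeff
    rw [hprod, Multiset.prod_X_sub_C_coeff _ (by simp)] at hcoeff
    simp only [Multiset.card_map, card_val, card_univ, Nat.sub_sub_self hk,
      Finset.esymm_map_val] at hcoeff
    exact (mul_left_cancel₀ (pow_ne_zero k (neg_ne_zero.2 one_ne_zero)) hcoeff).symm
  · rw [powersetCard_eq_empty.2 (by simpa using hk)]
    simp

end Matrix

lemma esymm_eq_sum_det_submatrix {m : ℕ} {M : Matrix (Fin m) (Fin m) ℝ} (hM : M.IsHermitian)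
    (ℓ : ℕ) :
    Esymm ℓ M =
      ∑ s ∈ powersetCard ℓ univ, (M.submatrix (Subtype.val : s → Fin m) Subtype.val).det := by
  rw [Esymm, dif_pos hM, hM.sum_det_submatrix_eq_sum_prod_eigenvalues]

lemma esymm_le_esymm {m : ℕ} {A B : Matrix (Fin m) (Fin m) ℝ} (hA : A.PosDef) (hAB : A ≤ B)
    (ℓ : ℕ) : Esymm ℓ A ≤ Esymm ℓ B := by
  rw [esymm_eq_sum_det_submatrix hA.isHermitian,
    esymm_eq_sum_det_submatrix (hA.of_le hAB).isHermitian]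
  exact sum_le_sum fun s _ ↦
    (hA.submatrix Subtype.val_injective).det_le_det (submatrix_le_submatrix hAB _)

theorem esymm_inv_antitone_in_weights_general {n m : ℕ} (X : Matrix (Fin n) (Fin m) ℝ)
    (z z' : Fin n → ℝ) (hzz' : ∀ i, z i ≤ z' i)
    (hpd : (Xᵀ * Matrix.diagonal z * X).PosDef)
    (ℓ : ℕ) :
    Esymm ℓ (Xᵀ * Matrix.diagonal z' * X)⁻¹ ≤ Esymm ℓ (Xᵀ * Matrix.diagonal z * X)⁻¹ := by
  have hle := transpose_mul_diagonal_mul_monotone X hzz'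
  exact esymm_le_esymm (hpd.of_le hle).inv (hpd.inv_le_inv hle) ℓ

theorem esymm_inv_antitone_in_weights {n m : ℕ} (X : Matrix (Fin n) (Fin m) ℝ)
    (z z' : Fin n → ℝ) (hz : ∀ i, 0 ≤ z i) (hzz' : ∀ i, z i ≤ z' i)
    (hpd : (Xᵀ * Matrix.diagonal z * X).PosDef)
    (ℓ : ℕ) (h1 : 1 ≤ ℓ) (h2 : ℓ ≤ m) :
    Esymm ℓ (Xᵀ * Matrix.diagonal z' * X)⁻¹ ≤ Esymm ℓ (Xᵀ * Matrix.diagonal z * X)⁻¹ :=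
  esymm_inv_antitone_in_weights_general X z z' hzz' hpd ℓ
end
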